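/- arXiv:2604.11999 — 6 statements merged into one kernel-verified Lean document; each statement's English description precedes it below -/
import Mathlib

section
/- Let H be the T×T cumulative-sum matrix (H_{jk} = 1 iff j ≥ k). The largest eigenvalue of H Hᵀ equals 1 / (4 sin²(π / (4T + 2))). -/
open Finset Matrix

private noncomputable def cc (θ : ℝ) (j : ℕ) : ℝ := Real.cos ((2 * j + 1) * θ)
private noncomputable def vv (θ : ℝ) (j : ℕ) : ℝ := Real.sin (2 * j * θ)

private lemma cc_tele (θ : ℝ) (j : ℕ) :
    cc θ j - cc θ (j + 1) = 2 * Real.sin θ * vv θ (j + 1) := by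
  simp only [cc, vv]
  push_cast
  rw [Real.cos_sub_cos,
    show ((2 * (j : ℝ) + 1) * θ + (2 * ((j : ℝ) + 1) + 1) * θ) / 2 = 2 * ((j : ℝ) + 1) * θ by ring,
    show ((2 * (j : ℝ) + 1) * θ - (2 * ((j : ℝ) + 1) + 1) * θ) / 2 = -θ by ring,
    Real.sin_neg]
  ring

private lemma vv_tele (θ : ℝ) (j : ℕ) :
    vv θ (j + 1) - vv θ j = 2 * Real.sin θ * cc θ j := by
  simp only [cc, vv]
  push_cast
  rw [Real.sin_sub_sin,
    show (2 * ((j : ℝ) + 1) * θ - 2 * (j : ℝ) * θ) / 2 = θ by ring,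
    show (2 * ((j : ℝ) + 1) * θ + 2 * (j : ℝ) * θ) / 2 = (2 * (j : ℝ) + 1) * θ by ring]

private lemma cc_rec (θ : ℝ) (j : ℕ) :
    cc θ (j - 1) + cc θ (j + 1) = 2 * Real.cos (2 * θ) * cc θ j := by
  cases j with
  | zero =>
      show cc θ 0 + cc θ 1 = _
      simp only [cc]
      push_cast
      rw [Real.cos_add_cos,
        show ((2 * (0:ℝ) + 1) * θ + (2 * 1 + 1) * θ) / 2 = 2 * θ by ring,
        show ((2 * (0:ℝ) + 1) * θ - (2 * 1 + 1) * θ) / 2 = -θ by ring,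
        Real.cos_neg]
      ring_nf
  | succ m =>
      show cc θ m + cc θ (m + 2) = _
      simp only [cc]
      push_cast
      rw [Real.cos_add_cos,
        show ((2 * (m:ℝ) + 1) * θ + (2 * ((m:ℝ) + 2) + 1) * θ) / 2 = (2 * ((m:ℝ) + 1) + 1) * θ by ring,
        show ((2 * (m:ℝ) + 1) * θ - (2 * ((m:ℝ) + 2) + 1) * θ) / 2 = -(2 * θ) by ring,
        Real.cos_neg]
      ring

private lemma tele_Ico (f : ℕ → ℝ) {a b : ℕ} (h : a ≤ b) :
    ∑ j ∈ Finset.Ico a b, (f j - f (j + 1)) = f a - f b := by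
  induction b with
  | zero =>
      have : a = 0 := Nat.le_zero.mp h
      subst this; simp
  | succ n ih =>
      rcases Nat.lt_or_ge a (n + 1) with h' | h'
      · rw [Finset.sum_Ico_succ_top (by omega), ih (by omega)]; ring
      · have : a = n + 1 := le_antisymm h h'
        subst this; simp

private lemma sum_cut (T a : ℕ) (h : a ≤ T) (f : ℕ → ℝ) :
    ∑ m ∈ Finset.range T, (if a ≤ m then f m else 0) = ∑ m ∈ Finset.Ico a T, f m := by
  rw [Finset.range_eq_Ico, ← Finset.sum_Ico_consecutive _ (Nat.zero_le a) h]
  have h1 : ∑ m ∈ Finset.Ico 0 a, (if a ≤ m then f m else 0) = 0 :=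
    Finset.sum_eq_zero fun m hm => by
      rw [if_neg (not_le.mpr (Finset.mem_Ico.mp hm).2)]
  have h2 : ∑ m ∈ Finset.Ico a T, (if a ≤ m then f m else 0) = ∑ m ∈ Finset.Ico a T, f m :=
    Finset.sum_congr rfl fun m hm => if_pos (Finset.mem_Ico.mp hm).1
  rw [h1, h2, zero_add]

private lemma sum_cut' (T a : ℕ) (h : a ≤ T) (f : ℕ → ℝ) :
    ∑ m ∈ Finset.range T, (if m < a then f m else 0) = ∑ m ∈ Finset.range a, f m := by
  rw [Finset.range_eq_Ico, ← Finset.sum_Ico_consecutive _ (Nat.zero_le a) h]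
  have h1 : ∑ m ∈ Finset.Ico a T, (if m < a then f m else 0) = 0 :=
    Finset.sum_eq_zero fun m hm => by
      rw [if_neg (not_lt.mpr (Finset.mem_Ico.mp hm).1)]
  have h2 : ∑ m ∈ Finset.Ico 0 a, (if m < a then f m else 0) = ∑ m ∈ Finset.Ico 0 a, f m :=
    Finset.sum_congr rfl fun m hm => if_pos (Finset.mem_Ico.mp hm).2
  rw [h1, h2, add_zero, ← Finset.range_eq_Ico]

private lemma wirtinger (T : ℕ) (c : ℕ → ℝ) (D : ℝ)
    (hcpos : ∀ j, j < T → 0 < c j)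
    (hrec : ∀ j : ℕ, c (j - 1) + c (j + 1) = D * c j)
    (hcT : c T = 0)
    (y : ℕ → ℝ) (hyT : y T = 0) :
    ∑ j ∈ Finset.range T, (2 - D) * y j ^ 2 ≤ ∑ j ∈ Finset.range T, (y (j + 1) - y j) ^ 2 := by
  rcases Nat.eq_zero_or_pos T with rfl | hTpos
  · simp
  obtain ⟨n, rfl⟩ : ∃ n, T = n + 1 := ⟨T - 1, by omega⟩
  set B : ℕ → ℝ := fun j => y j ^ 2 * (1 - c (j - 1) / c j) with hB
  have key : ∀ j, j + 1 < n + 1 →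
      (2 - D) * y j ^ 2 + (B (j + 1) - B j) ≤ (y (j + 1) - y j) ^ 2 := by
    intro j hj
    have hcj : 0 < c j := hcpos j (by omega)
    have hcj1 : 0 < c (j + 1) := hcpos (j + 1) hj
    have h1 : c (j - 1) = D * c j - c (j + 1) := by linarith [hrec j]
    have hBj : B j = y j ^ 2 * (1 - (D * c j - c (j + 1)) / c j) := by rw [hB]; simp [h1]
    have hBj1 : B (j + 1) = y (j + 1) ^ 2 * (1 - c j / c (j + 1)) := by simp [hB]
    have expand : (y (j + 1) - y j) ^ 2 - ((2 - D) * y j ^ 2 + (B (j + 1) - B j))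
        = (c j * y (j + 1) - c (j + 1) * y j) ^ 2 / (c j * c (j + 1)) := by
      rw [hBj, hBj1]; field_simp; ring
    nlinarith [div_nonneg (sq_nonneg (c j * y (j + 1) - c (j + 1) * y j))
      (le_of_lt (mul_pos hcj hcj1))]
  have hsum : ∑ j ∈ Finset.range n, ((2 - D) * y j ^ 2 + (B (j + 1) - B j))
      ≤ ∑ j ∈ Finset.range n, (y (j + 1) - y j) ^ 2 :=
    Finset.sum_le_sum fun j hj => key j (by have := Finset.mem_range.mp hj; omega)
  have htel : ∑ j ∈ Finset.range n, (B (j + 1) - B j) = B n - B 0 := Finset.sum_range_sub B n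
  have hc0 : c 0 ≠ 0 := ne_of_gt (hcpos 0 (by omega))
  have hB0 : B 0 = 0 := by simp [hB, div_self hc0]
  have hcn : c n ≠ 0 := ne_of_gt (hcpos n (by omega))
  have hBn : B n = y n ^ 2 * (1 - D) := by
    have h1 : c (n - 1) = D * c n := by
      have := hrec n
      rw [hcT] at this
      linarith
    rw [hB]
    simp only
    rw [h1, mul_div_assoc, div_self hcn, mul_one]
  have hsum2 : ∑ j ∈ Finset.range n, (2 - D) * y j ^ 2 + (B n - B 0)
      ≤ ∑ j ∈ Finset.range n, (y (j + 1) - y j) ^ 2 := by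
    rw [← htel, ← Finset.sum_add_distrib]; exact hsum
  rw [Finset.sum_range_succ, Finset.sum_range_succ]
  have hlast : (y (n + 1) - y n) ^ 2 = y n ^ 2 := by rw [hyT]; ring
  have hfin : B n + y n ^ 2 = (2 - D) * y n ^ 2 := by rw [hBn]; ring
  rw [hlast]
  linarith

/-- The largest eigenvalue of `H Hᵀ`, where `H` is the T×T cumulative-sum
matrix (`H j k = 1` iff `k ≤ j`), equals `1 / (4 sin²(π / (4T + 2)))`. -/
theorem max_eigenvalue_cumsum_gram (T : ℕ) (hT : 0 < T)
    (H : Matrix (Fin T) (Fin T) ℝ)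
    (hH : ∀ j k : Fin T, H j k = if k ≤ j then 1 else 0) :
    IsGreatest {μ : ℝ | ∃ x : Fin T → ℝ, x ≠ 0 ∧ (H * H.transpose).mulVec x = μ • x}
      (1 / (4 * Real.sin (Real.pi / (4 * T + 2)) ^ 2)) := by
  have hTR : (1 : ℝ) ≤ T := by exact_mod_cast hT
  set θ : ℝ := Real.pi / (4 * T + 2) with hθ
  have hden : (0 : ℝ) < 4 * T + 2 := by linarith
  have hθpos : 0 < θ := div_pos Real.pi_pos hden
  have hθlt : θ < Real.pi := div_lt_self Real.pi_pos (by linarith)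
  set s : ℝ := Real.sin θ with hs
  have hspos : 0 < s := Real.sin_pos_of_pos_of_lt_pi hθpos hθlt
  have h4s : (0 : ℝ) < 4 * s ^ 2 := by positivity
  have hπθ : θ * (4 * T + 2) = Real.pi := by
    rw [hθ]; field_simp
  have hhalf : (2 * (T : ℝ) + 1) * θ = Real.pi / 2 := by
    rw [hθ]; field_simp; ring
  have h2θ : 2 * θ < Real.pi := by nlinarith
  have hccT : cc θ T = 0 := by
    simp only [cc]
    rw [hhalf, Real.cos_pi_div_two]
  have hccpos : ∀ j, j < T → 0 < cc θ j := by
    intro j hj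
    have hjR : (j : ℝ) < (T : ℝ) := by exact_mod_cast hj
    apply Real.cos_pos_of_mem_Ioo
    constructor
    · have : 0 < (2 * (j : ℝ) + 1) * θ := by positivity
      linarith [Real.pi_pos]
    · calc (2 * (j : ℝ) + 1) * θ < (2 * (T : ℝ) + 1) * θ := by nlinarith
        _ = Real.pi / 2 := hhalf
  have hlam : 2 - 2 * Real.cos (2 * θ) = 4 * s ^ 2 := by
    have h1 := Real.cos_two_mul θ
    have h2 := Real.sin_sq_add_cos_sq θ
    rw [hs]; linarith
  have hz_gen : ∀ (x : Fin T → ℝ) (x' : ℕ → ℝ), (∀ j : Fin T, x j = x' j) →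
      ∀ k : Fin T, H.transpose.mulVec x k = ∑ m ∈ Finset.Ico (k : ℕ) T, x' m := by
    intro x x' hxx' k
    have : H.transpose.mulVec x k = ∑ j : Fin T, (if (k : ℕ) ≤ (j : ℕ) then x' (j : ℕ) else 0) := by
      simp only [Matrix.mulVec, dotProduct, Matrix.transpose_apply, hH]
      refine Finset.sum_congr rfl fun j _ => ?_
      rw [hxx' j]
      by_cases h : k ≤ j
      · rw [if_pos h, if_pos (Fin.le_def.mp h), one_mul]
      · rw [if_neg h, if_neg (fun hn => h (Fin.le_def.mpr hn)), zero_mul]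
    rw [this, Fin.sum_univ_eq_sum_range (fun m => if (k : ℕ) ≤ m then x' m else 0) T,
      sum_cut T k (le_of_lt k.isLt)]
  have hv1 : 0 < vv θ 1 := by
    simp only [vv]
    push_cast
    rw [show (2 : ℝ) * 1 * θ = 2 * θ by ring]
    exact Real.sin_pos_of_pos_of_lt_pi (by linarith) h2θ
  constructor
  · -- membership
    refine ⟨fun j => vv θ ((j : ℕ) + 1), ?_, ?_⟩
    · intro h
      have h1 := congrFun h ⟨0, hT⟩
      simp only [Pi.zero_apply] at h1
      have h2 : vv θ (((⟨0, hT⟩ : Fin T) : ℕ) + 1) = vv θ 1 := by norm_num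
      rw [h2] at h1
      exact absurd h1 (ne_of_gt hv1)
    · -- eigen equation
      funext j
      rw [← Matrix.mulVec_mulVec]
      have hz : H.transpose.mulVec (fun j => vv θ ((j : ℕ) + 1))
          = fun k : Fin T => cc θ (k : ℕ) / (2 * s) := by
        funext k
        rw [hz_gen _ (fun m => vv θ (m + 1)) (fun _ => rfl) k]
        have hterm : ∀ m, vv θ (m + 1) = (cc θ m - cc θ (m + 1)) / (2 * s) := by
          intro m
          rw [cc_tele θ m]
          field_simp
          rw [hs]
        rw [Finset.sum_congr rfl fun m _ => hterm m, ← Finset.sum_div,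
          tele_Ico (cc θ) (le_of_lt k.isLt), hccT, sub_zero]
      rw [hz]
      have e1 : H.mulVec (fun k : Fin T => cc θ (k : ℕ) / (2 * s)) j
          = ∑ k : Fin T, (if (k : ℕ) < (j : ℕ) + 1 then cc θ (k : ℕ) / (2 * s) else 0) := by
        simp only [Matrix.mulVec, dotProduct, hH]
        refine Finset.sum_congr rfl fun k _ => ?_
        by_cases h : k ≤ j
        · rw [if_pos h, if_pos (Nat.lt_succ_of_le (Fin.le_def.mp h)), one_mul]
        · rw [if_neg h, if_neg (fun hn => h (Fin.le_def.mpr (Nat.lt_succ_iff.mp hn))), zero_mul]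
      rw [e1, Fin.sum_univ_eq_sum_range (fun m => if m < (j : ℕ) + 1 then cc θ m / (2 * s) else 0) T,
        sum_cut' T ((j : ℕ) + 1) j.isLt]
      have hterm2 : ∀ m : ℕ, cc θ m / (2 * s) = 1 / (4 * s ^ 2) * (vv θ (m + 1) - vv θ m) := by
        intro m
        rw [vv_tele θ m]
        field_simp
        ring
      rw [Finset.sum_congr rfl fun m _ => hterm2 m, ← Finset.mul_sum,
        Finset.sum_range_sub (vv θ)]
      have hvv0 : vv θ 0 = 0 := by simp [vv]
      rw [hvv0, sub_zero, Pi.smul_apply, smul_eq_mul]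
  · -- upper bound
    rintro μ ⟨x, hx0, hxe⟩
    set x' : ℕ → ℝ := fun m => if h : m < T then x ⟨m, h⟩ else 0 with hx'
    have hxx' : ∀ j : Fin T, x j = x' (j : ℕ) := by
      intro j
      rw [hx']
      simp [j.isLt]
    set y : ℕ → ℝ := fun k => ∑ m ∈ Finset.Ico k T, x' m with hy
    have hyT : y T = 0 := by simp [hy]
    have hyx : ∀ k, y (k + 1) - y k = -x' k := by
      intro k
      rcases Nat.lt_or_ge k T with hk | hk
      · have h1 : y k = x' k + y (k + 1) := Finset.sum_eq_sum_Ico_succ_bot hk x'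
        linarith
      · have e1 : y k = 0 := by
          rw [hy]; simp only; rw [Finset.Ico_eq_empty (by omega)]; simp
        have e2 : y (k + 1) = 0 := by
          rw [hy]; simp only; rw [Finset.Ico_eq_empty (by omega)]; simp
        have e3 : x' k = 0 := by rw [hx']; simp [Nat.not_lt.mpr hk]
        rw [e1, e2, e3]; ring
    have hz2 : ∀ k : Fin T, H.transpose.mulVec x k = y (k : ℕ) := fun k =>
      hz_gen x x' hxx' k
    have hd1 : x ⬝ᵥ ((H * H.transpose).mulVec x) = ∑ k ∈ Finset.range T, y k ^ 2 := by
      rw [← Matrix.mulVec_mulVec, dotProduct_mulVec, ← Matrix.mulVec_transpose]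
      simp only [dotProduct]
      have h1 : ∀ k : Fin T, (H.transpose.mulVec x) k * (H.transpose.mulVec x) k
          = y (k : ℕ) * y (k : ℕ) := fun k => by rw [hz2 k]
      rw [Finset.sum_congr rfl fun k _ => h1 k,
        Fin.sum_univ_eq_sum_range (fun m => y m * y m) T]
      exact Finset.sum_congr rfl fun k _ => by ring
    have hd2 : x ⬝ᵥ ((H * H.transpose).mulVec x) = μ * ∑ j ∈ Finset.range T, x' j ^ 2 := by
      rw [hxe]
      simp only [dotProduct, Pi.smul_apply, smul_eq_mul]
      have h1 : ∀ j : Fin T, x j * (μ * x j) = x' (j : ℕ) * (μ * x' (j : ℕ)) := fun j => by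
        rw [hxx' j]
      rw [Finset.sum_congr rfl fun j _ => h1 j,
        Fin.sum_univ_eq_sum_range (fun m => x' m * (μ * x' m)) T, Finset.mul_sum]
      exact Finset.sum_congr rfl fun j _ => by ring
    have hS1pos : 0 < ∑ j ∈ Finset.range T, x' j ^ 2 := by
      obtain ⟨j0, hj0⟩ := Function.ne_iff.mp hx0
      apply Finset.sum_pos'
      · intro m _; positivity
      · refine ⟨(j0 : ℕ), Finset.mem_range.mpr j0.isLt, ?_⟩
        have hne : x' (j0 : ℕ) ≠ 0 := by rw [← hxx' j0]; simpa using hj0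
        exact lt_of_le_of_ne (sq_nonneg _) (Ne.symm (pow_ne_zero 2 hne))
    have hw := wirtinger T (cc θ) (2 * Real.cos (2 * θ)) hccpos (cc_rec θ) hccT y hyT
    have hL : ∑ j ∈ Finset.range T, (2 - 2 * Real.cos (2 * θ)) * y j ^ 2
        = 4 * s ^ 2 * ∑ j ∈ Finset.range T, y j ^ 2 := by
      rw [Finset.mul_sum]
      exact Finset.sum_congr rfl fun j _ => by rw [hlam]
    have hR : ∑ j ∈ Finset.range T, (y (j + 1) - y j) ^ 2
        = ∑ j ∈ Finset.range T, x' j ^ 2 :=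
      Finset.sum_congr rfl fun j _ => by rw [hyx j]; ring
    rw [hL, hR] at hw
    have hSy : ∑ k ∈ Finset.range T, y k ^ 2 = μ * ∑ j ∈ Finset.range T, x' j ^ 2 :=
      hd1.symm.trans hd2
    rw [hSy] at hw
    show μ ≤ 1 / (4 * s ^ 2)
    rw [le_div_iff₀ h4s]
    have := le_of_mul_le_mul_right (by linarith : μ * (4 * s ^ 2) * (∑ j ∈ Finset.range T, x' j ^ 2) ≤ 1 * (∑ j ∈ Finset.range T, x' j ^ 2)) hS1pos
    linarith
end

section
/- Define the feasibility polytope X = {p ∈ ℝ^T : P̲ ⪯ p ⪯ P̄, S̲ ⪯ Hp ⪯ S̄}, where H is the cumulative-sum matrix. If X ≠ ∅ then B̲ ⪯ B̄, where B̲_t = C̄_t + max_{τ≥t}(S̲_τ − C̄_τ), B̄_t = C̲_t + min_{τ≥t}(S̄_τ − C̲_τ), C̲ = H P̲, C̄ = H P̄, assuming the necessary conditions P̲ ⪯ P̄ and C̲ ⪯ S̲ ⪯ S̄ ⪯ C̄ hold. -/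
/-- Cumulative sum: `(Hp)_t = ∑_{τ ≤ t} p_τ`. -/
def cumsum {T : ℕ} (p : Fin T → ℝ) (t : Fin T) : ℝ := ∑ τ ∈ Finset.Iic t, p τ

/-- Lower envelope `B̲_t = C̄_t + max_{τ≥t}(S̲_τ − C̄_τ)` with `C̄ = H P̄`. -/
def Blo {T : ℕ} (Phi Slo : Fin T → ℝ) (t : Fin T) : ℝ :=
  cumsum Phi t + (Finset.Ici t).sup' Finset.nonempty_Ici (fun τ => Slo τ - cumsum Phi τ)

/-- Upper envelope `B̄_t = C̲_t + min_{τ≥t}(S̄_τ − C̲_τ)` with `C̲ = H P̲`. -/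
def Bhi {T : ℕ} (Plo Shi : Fin T → ℝ) (t : Fin T) : ℝ :=
  cumsum Plo t + (Finset.Ici t).inf' Finset.nonempty_Ici (fun τ => Shi τ - cumsum Plo τ)

/-!
Every feasible `p` separates the two envelopes: for `τ ≥ t`,
`S̲_τ ≤ (Hp)_τ = (Hp)_t + ∑_{t<k≤τ} p_k ≤ (Hp)_t + C̄_τ - C̄_t`, hence `B̲_t ≤ (Hp)_t`, and
symmetrically `(Hp)_t ≤ B̄_t` using `P̲ ⪯ p` and `Hp ⪯ S̄`.
-/

section Envelopes

variable {T : ℕ}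

lemma cumsum_sub_cumsum_le {p q : Fin T → ℝ} (hpq : ∀ i, p i ≤ q i) {t σ : Fin T} (htσ : t ≤ σ) :
    cumsum p σ - cumsum p t ≤ cumsum q σ - cumsum q t := by
  have hsub : Finset.Iic t ⊆ Finset.Iic σ := Finset.Iic_subset_Iic.mpr htσ
  simp only [cumsum, ← Finset.sum_sdiff_eq_sub hsub]
  exact Finset.sum_le_sum fun i _ => hpq i

lemma Blo_le_cumsum {p Phi Slo : Fin T → ℝ} (hp : ∀ i, p i ≤ Phi i)
    (hSlo : ∀ i, Slo i ≤ cumsum p i) (t : Fin T) :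
    Blo Phi Slo t ≤ cumsum p t := by
  have hsup : (Finset.Ici t).sup' Finset.nonempty_Ici (fun τ => Slo τ - cumsum Phi τ)
      ≤ cumsum p t - cumsum Phi t :=
    Finset.sup'_le _ _ fun σ hσ => by
      have := cumsum_sub_cumsum_le hp (Finset.mem_Ici.mp hσ)
      linarith [hSlo σ]
  rw [Blo]
  linarith

lemma cumsum_le_Bhi {p Plo Shi : Fin T → ℝ} (hp : ∀ i, Plo i ≤ p i)
    (hShi : ∀ i, cumsum p i ≤ Shi i) (t : Fin T) :
    cumsum p t ≤ Bhi Plo Shi t := by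
  have hinf : cumsum p t - cumsum Plo t
      ≤ (Finset.Ici t).inf' Finset.nonempty_Ici (fun τ => Shi τ - cumsum Plo τ) :=
    Finset.le_inf' _ _ fun σ hσ => by
      have := cumsum_sub_cumsum_le hp (Finset.mem_Ici.mp hσ)
      linarith [hShi σ]
  rw [Bhi]
  linarith

end Envelopes

theorem feasibility_implies_envelopes_general (T : ℕ) (Plo Phi Slo Shi : Fin T → ℝ)
    (hX : ∃ p : Fin T → ℝ, ∀ t, Plo t ≤ p t ∧ p t ≤ Phi t ∧
        Slo t ≤ cumsum p t ∧ cumsum p t ≤ Shi t) :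
    ∀ t, Blo Phi Slo t ≤ Bhi Plo Shi t := by
  obtain ⟨p, hp⟩ := hX
  intro t
  calc Blo Phi Slo t ≤ cumsum p t :=
        Blo_le_cumsum (fun i => (hp i).2.1) (fun i => (hp i).2.2.1) t
    _ ≤ Bhi Plo Shi t := cumsum_le_Bhi (fun i => (hp i).1) (fun i => (hp i).2.2.2) t

/-- If the feasibility polytope
`X = {p : P̲ ⪯ p ⪯ P̄, S̲ ⪯ Hp ⪯ S̄}` is nonempty (given the necessary conditions
`P̲ ⪯ P̄` and `H P̲ ⪯ S̲ ⪯ S̄ ⪯ H P̄`), then `B̲ ⪯ B̄`. -/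
theorem feasibility_implies_envelopes (T : ℕ) (Plo Phi Slo Shi : Fin T → ℝ)
    (hP : ∀ t, Plo t ≤ Phi t)
    (hC : ∀ t, cumsum Plo t ≤ Slo t ∧ Slo t ≤ Shi t ∧ Shi t ≤ cumsum Phi t)
    (hX : ∃ p : Fin T → ℝ, ∀ t, Plo t ≤ p t ∧ p t ≤ Phi t ∧
        Slo t ≤ cumsum p t ∧ cumsum p t ≤ Shi t) :
    ∀ t, Blo Phi Slo t ≤ Bhi Plo Shi t :=
  feasibility_implies_envelopes_general T Plo Phi Slo Shi hX
end

section
/- Define X = {p ∈ ℝ^T : P̲ ⪯ p ⪯ P̄, S̲ ⪯ Hp ⪯ S̄} with H the cumulative-sum matrix, and suppose P̲ ⪯ P̄ and H P̲ ⪯ S̲ ⪯ S̄ ⪯ H P̄ componentwise. Define B̲, B̄ as B̲_t = (H P̄)_t + max_{τ≥t}(S̲_τ − (H P̄)_τ) and B̄_t = (H P̲)_t + min_{τ≥t}(S̄_τ − (H P̲)_τ). If B̲ ⪯ B̄, then X is nonempty; in particular, the greedy forward construction S_0 = 0, β̲_t = max(B̲_t, S_{t−1} + P̲_t), β̄_t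 = min(B̄_t, S_{t−1} + P̄_t), S_t = clip(S_{t−1} + p̂_t, β̲_t, β̄_t), p_t = S_t − S_{t−1} produces a point p ∈ X for any target p̂ ∈ ℝ^T. -/
/-- Greedy forward construction: `S_0 = 0`,
`S_t = clip(S_{t−1} + p̂_t, max(B̲_t, S_{t−1}+P̲_t), min(B̄_t, S_{t−1}+P̄_t))`. -/
def greedyS {T : ℕ} (Plo Phi Slo Shi phat : Fin T → ℝ) : ℕ → ℝ
  | 0 => 0
  | n + 1 =>
    if h : n < T then
      let t : Fin T := ⟨n, h⟩
      let S := greedyS Plo Phi Slo Shi phat n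
      min (max (S + phat t) (max (Blo Phi Slo t) (S + Plo t)))
          (min (Bhi Plo Shi t) (S + Phi t))
    else greedyS Plo Phi Slo Shi phat n

/-!
`[B̲_t, B̄_t]` is the range of cumulative sums `S_t` from which the remaining constraints can still
be met: `S̲_t ≤ B̲_t`, `B̄_t ≤ S̄_t`, and `B̲_t ≤ B̲_{t-1} + P̄_t`, `B̄_{t-1} + P̲_t ≤ B̄_t`, read with
`B̲_{-1} = B̄_{-1} = 0` at `t = 0` (this is where `H P̲ ⪯ S̄` and `S̲ ⪯ H P̄` enter). Hence if
`S_{t-1} ∈ [B̲_{t-1}, B̄_{t-1}]`, both lower bounds `B̲_t`, `S_{t-1} + P̲_t` of the clip are below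
both upper bounds `B̄_t`, `S_{t-1} + P̄_t`, so `S_t ∈ [β̲_t, β̄_t]` and the invariant propagates.
-/

def IsFeasible {T : ℕ} (Plo Phi Slo Shi p : Fin T → ℝ) : Prop :=
  ∀ t, Plo t ≤ p t ∧ p t ≤ Phi t ∧ Slo t ≤ cumsum p t ∧ cumsum p t ≤ Shi t

section cumsum

variable {T : ℕ}

theorem cumsum_sub_eq (S : ℕ → ℝ) (t : Fin T) :
    cumsum (fun τ : Fin T => S (τ + 1) - S τ) t = S (t + 1) - S 0 := by
  rw [cumsum, ← Finset.sum_range_sub, Nat.range_succ_eq_Iic, ← Fin.map_valEmbedding_Iic,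
    Finset.sum_map]
  rfl

theorem cumsum_zero (p : Fin T → ℝ) (h : 0 < T) : cumsum p ⟨0, h⟩ = p ⟨0, h⟩ := by
  rw [cumsum, Finset.sum_eq_single_of_mem _ (Finset.mem_Iic.mpr le_rfl)]
  intro τ hτ hne
  exact absurd (Fin.ext (by simpa [Fin.le_def] using Finset.mem_Iic.mp hτ)) hne

theorem cumsum_succ (p : Fin T → ℝ) (n : ℕ) (h : n + 1 < T) :
    cumsum p ⟨n + 1, h⟩ = cumsum p ⟨n, by omega⟩ + p ⟨n + 1, h⟩ := by
  have hIic : Finset.Iic (⟨n + 1, h⟩ : Fin T) = insert ⟨n + 1, h⟩ (Finset.Iic ⟨n, by omega⟩) := by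
    ext τ
    simp only [Finset.mem_Iic, Finset.mem_insert, Fin.le_def, Fin.ext_iff]
    omega
  rw [cumsum, cumsum, hIic, Finset.sum_insert (by simp [Fin.le_def]), add_comm]

end cumsum

section envelopes

variable {T : ℕ} (Plo Phi Slo Shi : Fin T → ℝ)

theorem le_Blo_self (t : Fin T) : Slo t ≤ Blo Phi Slo t := by
  have := Finset.le_sup' (fun τ => Slo τ - cumsum Phi τ) (Finset.mem_Ici.mpr (le_refl t))
  rw [Blo]
  linarith

theorem Bhi_le_self (t : Fin T) : Bhi Plo Shi t ≤ Shi t := by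
  have := Finset.inf'_le (fun τ => Shi τ - cumsum Plo τ) (Finset.mem_Ici.mpr (le_refl t))
  rw [Bhi]
  linarith

theorem Blo_zero_le (hS : ∀ τ, Slo τ ≤ cumsum Phi τ) (h : 0 < T) :
    Blo Phi Slo ⟨0, h⟩ ≤ Phi ⟨0, h⟩ := by
  have : (Finset.Ici ⟨0, h⟩).sup' Finset.nonempty_Ici (fun τ => Slo τ - cumsum Phi τ) ≤ 0 :=
    Finset.sup'_le _ _ fun τ _ => sub_nonpos.mpr (hS τ)
  rw [Blo, cumsum_zero]
  linarith

theorem le_Bhi_zero (hS : ∀ τ, cumsum Plo τ ≤ Shi τ) (h : 0 < T) :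
    Plo ⟨0, h⟩ ≤ Bhi Plo Shi ⟨0, h⟩ := by
  have : 0 ≤ (Finset.Ici ⟨0, h⟩).inf' Finset.nonempty_Ici (fun τ => Shi τ - cumsum Plo τ) :=
    Finset.le_inf' _ _ fun τ _ => sub_nonneg.mpr (hS τ)
  rw [Bhi, cumsum_zero]
  linarith

theorem Blo_succ_le (n : ℕ) (h : n + 1 < T) :
    Blo Phi Slo ⟨n + 1, h⟩ ≤ Blo Phi Slo ⟨n, by omega⟩ + Phi ⟨n + 1, h⟩ := by
  have := Finset.sup'_mono (fun τ => Slo τ - cumsum Phi τ)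
    (Finset.Ici_subset_Ici.mpr
      (Fin.mk_le_mk.mpr n.le_succ : (⟨n, by omega⟩ : Fin T) ≤ ⟨n + 1, h⟩)) Finset.nonempty_Ici
  rw [Blo, Blo, cumsum_succ]
  linarith

theorem le_Bhi_succ (n : ℕ) (h : n + 1 < T) :
    Bhi Plo Shi ⟨n, by omega⟩ + Plo ⟨n + 1, h⟩ ≤ Bhi Plo Shi ⟨n + 1, h⟩ := by
  have := Finset.inf'_mono (fun τ => Shi τ - cumsum Plo τ)
    (Finset.Ici_subset_Ici.mpr
      (Fin.mk_le_mk.mpr n.le_succ : (⟨n, by omega⟩ : Fin T) ≤ ⟨n + 1, h⟩)) Finset.nonempty_Ici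
  rw [Bhi, Bhi, cumsum_succ]
  linarith

end envelopes

section greedy

variable {T : ℕ} {Plo Phi Slo Shi : Fin T → ℝ} (phat : Fin T → ℝ)

local notation "S" => greedyS Plo Phi Slo Shi phat

theorem greedyS_succ (n : ℕ) (h : n < T) :
    S (n + 1) = min (max (S n + phat ⟨n, h⟩) (max (Blo Phi Slo ⟨n, h⟩) (S n + Plo ⟨n, h⟩)))
      (min (Bhi Plo Shi ⟨n, h⟩) (S n + Phi ⟨n, h⟩)) := by
  rw [greedyS, dif_pos h]

theorem greedyS_succ_bounds (hP : ∀ t, Plo t ≤ Phi t) (hB : ∀ t, Blo Phi Slo t ≤ Bhi Plo Shi t)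
    (n : ℕ) (h : n < T) (hlo : Blo Phi Slo ⟨n, h⟩ ≤ S n + Phi ⟨n, h⟩)
    (hhi : S n + Plo ⟨n, h⟩ ≤ Bhi Plo Shi ⟨n, h⟩) :
    max (Blo Phi Slo ⟨n, h⟩) (S n + Plo ⟨n, h⟩) ≤ S (n + 1) ∧
      S (n + 1) ≤ min (Bhi Plo Shi ⟨n, h⟩) (S n + Phi ⟨n, h⟩) := by
  have hclip : max (Blo Phi Slo ⟨n, h⟩) (S n + Plo ⟨n, h⟩) ≤
      min (Bhi Plo Shi ⟨n, h⟩) (S n + Phi ⟨n, h⟩) :=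
    max_le (le_min (hB _) hlo) (le_min hhi (by linarith [hP ⟨n, h⟩]))
  rw [greedyS_succ phat n h]
  exact ⟨le_min (le_max_right _ _) hclip, min_le_right _ _⟩

theorem greedyS_admissible (hP : ∀ t, Plo t ≤ Phi t) (hSlo : ∀ t, Slo t ≤ cumsum Phi t)
    (hShi : ∀ t, cumsum Plo t ≤ Shi t) (hB : ∀ t, Blo Phi Slo t ≤ Bhi Plo Shi t)
    (n : ℕ) (h : n < T) :
    Blo Phi Slo ⟨n, h⟩ ≤ S n + Phi ⟨n, h⟩ ∧ S n + Plo ⟨n, h⟩ ≤ Bhi Plo Shi ⟨n, h⟩ := by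
  induction n with
  | zero =>
    rw [greedyS, zero_add, zero_add]
    exact ⟨Blo_zero_le Phi Slo hSlo h, le_Bhi_zero Plo Shi hShi h⟩
  | succ n ih =>
    have hn : n < T := by omega
    obtain ⟨hlo, hhi⟩ := greedyS_succ_bounds phat hP hB n hn (ih hn).1 (ih hn).2
    constructor
    · calc Blo Phi Slo ⟨n + 1, h⟩ ≤ Blo Phi Slo ⟨n, hn⟩ + Phi ⟨n + 1, h⟩ := Blo_succ_le _ _ n h
        _ ≤ S (n + 1) + Phi ⟨n + 1, h⟩ := by gcongr; exact (le_max_left _ _).trans hlo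
    · calc S (n + 1) + Plo ⟨n + 1, h⟩ ≤ Bhi Plo Shi ⟨n, hn⟩ + Plo ⟨n + 1, h⟩ := by
            gcongr; exact hhi.trans (min_le_left _ _)
        _ ≤ Bhi Plo Shi ⟨n + 1, h⟩ := le_Bhi_succ _ _ n h

theorem isFeasible_greedyS (hP : ∀ t, Plo t ≤ Phi t) (hSlo : ∀ t, Slo t ≤ cumsum Phi t)
    (hShi : ∀ t, cumsum Plo t ≤ Shi t) (hB : ∀ t, Blo Phi Slo t ≤ Bhi Plo Shi t) :
    IsFeasible Plo Phi Slo Shi fun t => S (t + 1) - S t := by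
  rintro ⟨n, h⟩
  obtain ⟨hlo, hhi⟩ := greedyS_admissible phat hP hSlo hShi hB n h
  obtain ⟨hBlo, hPlo⟩ := max_le_iff.mp (greedyS_succ_bounds phat hP hB n h hlo hhi).1
  obtain ⟨hBhi, hPhi⟩ := le_min_iff.mp (greedyS_succ_bounds phat hP hB n h hlo hhi).2
  have hcum : cumsum (fun τ : Fin T => S (τ + 1) - S τ) ⟨n, h⟩ = S (n + 1) := by
    rw [cumsum_sub_eq, greedyS, sub_zero]
  rw [hcum]
  exact ⟨by linarith, by linarith, (le_Blo_self Phi Slo _).trans hBlo,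
    hBhi.trans (Bhi_le_self Plo Shi _)⟩

end greedy

/-- If `P̲ ⪯ P̄`, `H P̲ ⪯ S̲ ⪯ S̄ ⪯ H P̄`, and `B̲ ⪯ B̄`, then the
feasibility polytope `X` is nonempty; in particular, for any target `p̂`, the greedy
construction `p_t = S_t − S_{t−1}` produces a point `p ∈ X`. -/
theorem envelopes_imply_feasible (T : ℕ) (Plo Phi Slo Shi : Fin T → ℝ)
    (hP : ∀ t, Plo t ≤ Phi t)
    (hC : ∀ t, cumsum Plo t ≤ Slo t ∧ Slo t ≤ Shi t ∧ Shi t ≤ cumsum Phi t)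
    (hB : ∀ t, Blo Phi Slo t ≤ Bhi Plo Shi t) :
    (∃ p : Fin T → ℝ, ∀ t, Plo t ≤ p t ∧ p t ≤ Phi t ∧
        Slo t ≤ cumsum p t ∧ cumsum p t ≤ Shi t) ∧
    (∀ phat : Fin T → ℝ,
      ∀ p : Fin T → ℝ,
        (∀ t : Fin T, p t = greedyS Plo Phi Slo Shi phat (t.1 + 1)
            - greedyS Plo Phi Slo Shi phat t.1) →
        ∀ t, Plo t ≤ p t ∧ p t ≤ Phi t ∧
          Slo t ≤ cumsum p t ∧ cumsum p t ≤ Shi t) := by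
  have hSlo : ∀ t, Slo t ≤ cumsum Phi t := fun t => (hC t).2.1.trans (hC t).2.2
  have hShi : ∀ t, cumsum Plo t ≤ Shi t := fun t => (hC t).1.trans (hC t).2.1
  refine ⟨⟨_, isFeasible_greedyS 0 hP hSlo hShi hB⟩, fun phat p hp => ?_⟩
  obtain rfl : p = _ := funext hp
  exact isFeasible_greedyS phat hP hSlo hShi hB
end

section
/- Suppose p ∈ ℝ^T satisfies P̲ ⪯ p ⪯ P̄ and there is some t with (Hp)_t < B̲_t, where B̲ is the lower envelope from the feasibility theorem. Then there exists t′ ≥ t with (Hp)_{t′} < S̲_{t′}, i.e., p violates the cumulative lower bound at some later time. -/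
section

variable {T : ℕ}

lemma cumsum_eq_add_sum_Ioc (p : Fin T → ℝ) {a b : Fin T} (hab : a ≤ b) :
    cumsum p b = cumsum p a + ∑ τ ∈ Finset.Ioc a b, p τ := by
  rw [cumsum, cumsum, ← Finset.Iic_union_Ioc_eq_Iic hab,
    Finset.sum_union (Finset.Iic_disjoint_Ioc le_rfl)]

lemma cumsum_sub_cumsum_le_of_le {p q : Fin T → ℝ} (hpq : ∀ τ, p τ ≤ q τ) {a b : Fin T}
    (hab : a ≤ b) : cumsum p b - cumsum p a ≤ cumsum q b - cumsum q a := by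
  rw [cumsum_eq_add_sum_Ioc p hab, cumsum_eq_add_sum_Ioc q hab, add_sub_cancel_left,
    add_sub_cancel_left]
  exact Finset.sum_le_sum fun τ _ => hpq τ

lemma exists_le_Blo_eq (Phi Slo : Fin T → ℝ) (t : Fin T) :
    ∃ t', t ≤ t' ∧ Blo Phi Slo t = cumsum Phi t + (Slo t' - cumsum Phi t') := by
  obtain ⟨t', ht', hmax⟩ := Finset.exists_mem_eq_sup' Finset.nonempty_Ici
    (fun τ => Slo τ - cumsum Phi τ)
  exact ⟨t', Finset.mem_Ici.mp ht', by rw [Blo, hmax]⟩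

end

/-- If `P̲ ⪯ p ⪯ P̄` and `(Hp)_t < B̲_t` at some `t`, then there exists
`t′ ≥ t` with `(Hp)_{t′} < S̲_{t′}`. -/
theorem below_lower_envelope_violates (T : ℕ) (Plo Phi Slo : Fin T → ℝ)
    (p : Fin T → ℝ) (hp : ∀ t, Plo t ≤ p t ∧ p t ≤ Phi t)
    (t : Fin T) (hviol : cumsum p t < Blo Phi Slo t) :
    ∃ t' : Fin T, t ≤ t' ∧ cumsum p t' < Slo t' := by
  obtain ⟨t', htt', hBlo⟩ := exists_le_Blo_eq Phi Slo t
  have hincr := cumsum_sub_cumsum_le_of_le (fun τ => (hp τ).2) htt'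
  exact ⟨t', htt', by linarith⟩
end

section
/- Let ψ(u) = min_{p ∈ [P̲, P̄]} L(p, u), where L(p, u) = ½‖p − b‖² + (κ/2)‖p‖² + ⟨u̲, S̲ − Hp⟩ + ⟨ū, Hp − S̄⟩ with u = (u̲, ū) ∈ ℝ^{2T}, κ > 0, and H the cumulative-sum matrix. Then ψ is concave and differentiable, with ∇ψ(u) = (S̲ − Hp†(u), Hp†(u) − S̄), where p†(u) = clip((b + Hᵀ(u̲ − ū))/(1+κ), P̲, P̄) is the unique minimizer of L(·, u) over the box. -/
/-- coordinate bound in Euclidean space -/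
lemma coord_abs_le_norm {T : ℕ} (x : EuclideanSpace ℝ (Fin T)) (t : Fin T) :
    |x t| ≤ ‖x‖ := by
  rw [EuclideanSpace.norm_eq]
  have h1 : |x t| = Real.sqrt (‖x t‖ ^ 2) := by
    rw [Real.sqrt_sq_eq_abs, Real.norm_eq_abs, abs_abs]
  rw [h1]
  apply Real.sqrt_le_sqrt
  exact Finset.single_le_sum (f := fun i => ‖x i‖ ^ 2)
    (fun i _ => sq_nonneg _) (Finset.mem_univ t)

/-- clipping is 1-Lipschitz -/
lemma clip_lipschitz (a a' lo hi : ℝ) :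
    |min (max a lo) hi - min (max a' lo) hi| ≤ |a - a'| := by
  have h := abs_min_sub_min_le_max (max a lo) hi (max a' lo) hi
  have h2 : max |max a lo - max a' lo| |hi - hi| = |max a lo - max a' lo| := by
    simp
  exact (h.trans_eq h2).trans (abs_max_sub_max_le_abs _ _ _)

/-- the clipped point minimizes a strongly convex quadratic on the interval -/
lemma clip_opt (a B lo hi x : ℝ) (ha : 0 < a) (hlh : lo ≤ hi)
    (hx1 : lo ≤ x) (hx2 : x ≤ hi) :
    a / 2 * (min (max (B / a) lo) hi) ^ 2 - B * (min (max (B / a) lo) hi)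
      + a / 2 * (x - min (max (B / a) lo) hi) ^ 2
    ≤ a / 2 * x ^ 2 - B * x := by
  have hvar : 0 ≤ (x - min (max (B / a) lo) hi) * (a * min (max (B / a) lo) hi - B) := by
    rcases le_total (B / a) lo with h1 | h1
    · have hq' : min (max (B / a) lo) hi = lo := by
        rw [max_eq_right h1, min_eq_left hlh]
      rw [hq']
      rw [div_le_iff₀ ha] at h1
      nlinarith [h1, hx1]
    · rcases le_total (B / a) hi with h2 | h2
      · have hq' : min (max (B / a) lo) hi = B / a := by
          rw [max_eq_left h1, min_eq_left h2]
        rw [hq']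
        have : a * (B / a) - B = 0 := by field_simp; ring
        rw [this, mul_zero]
      · have hq' : min (max (B / a) lo) hi = hi :=
          min_eq_right (le_trans h2 (le_max_left _ _))
        rw [hq']
        rw [le_div_iff₀ ha] at h2
        nlinarith [h2, hx2]
  nlinarith [hvar]

/-- The dual function `ψ(u) = min_{p ∈ [P̲,P̄]} L(p, u)` is concave and
differentiable, with `∇ψ(u) = (S̲ − Hp†(u), Hp†(u) − S̄)`, where
`p†(u) = clip((b + Hᵀ(u̲ − ū))/(1+κ), P̲, P̄)` is the unique minimizer of `L(·,u)`. -/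
theorem dual_function_concave_gradient (T : ℕ) (κ : ℝ) (hκ : 0 < κ)
    (b Plo Phi Slo Shi : Fin T → ℝ) (hP : ∀ t, Plo t ≤ Phi t)
    (L : (Fin T → ℝ) → EuclideanSpace ℝ (Fin T) × EuclideanSpace ℝ (Fin T) → ℝ)
    (hL : ∀ p u, L p u =
      (1 / 2) * ∑ t, (p t - b t) ^ 2 + (κ / 2) * ∑ t, (p t) ^ 2
        + ∑ t, u.1 t * (Slo t - cumsum p t) + ∑ t, u.2 t * (cumsum p t - Shi t))
    (pdag : EuclideanSpace ℝ (Fin T) × EuclideanSpace ℝ (Fin T) → Fin T → ℝ)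
    (hpdag : ∀ u t, pdag u t =
      min (max ((b t + ∑ τ ∈ Finset.Ici t, (u.1 τ - u.2 τ)) / (1 + κ)) (Plo t)) (Phi t))
    (ψ : EuclideanSpace ℝ (Fin T) × EuclideanSpace ℝ (Fin T) → ℝ)
    (hψ : ∀ u, ψ u = L (pdag u) u) :
    (∀ u, (∀ t, Plo t ≤ pdag u t ∧ pdag u t ≤ Phi t) ∧
      ∀ p : Fin T → ℝ, (∀ t, Plo t ≤ p t ∧ p t ≤ Phi t) → p ≠ pdag u →
        L (pdag u) u < L p u) ∧
    ConcaveOn ℝ Set.univ ψ ∧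
    (∀ u, HasFDerivAt ψ
      (((innerSL ℝ ((WithLp.equiv 2 (Fin T → ℝ)).symm
            (fun t => Slo t - cumsum (pdag u) t))).comp
          (ContinuousLinearMap.fst ℝ (EuclideanSpace ℝ (Fin T))
            (EuclideanSpace ℝ (Fin T)))) +
       ((innerSL ℝ ((WithLp.equiv 2 (Fin T → ℝ)).symm
            (fun t => cumsum (pdag u) t - Shi t))).comp
          (ContinuousLinearMap.snd ℝ (EuclideanSpace ℝ (Fin T))
            (EuclideanSpace ℝ (Fin T))))) u) := by
  have hκ1 : (0:ℝ) < 1 + κ := by linarith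
  -- the cumulative dual weight
  set c : (EuclideanSpace ℝ (Fin T) × EuclideanSpace ℝ (Fin T)) → Fin T → ℝ :=
    fun u t => ∑ τ ∈ Finset.Ici t, (u.1 τ - u.2 τ) with hc
  -- swap of summation
  have hswap : ∀ (g p : Fin T → ℝ),
      ∑ t, g t * cumsum p t = ∑ t, (∑ τ ∈ Finset.Ici t, g τ) * p t := by
    intro g p
    unfold cumsum
    simp only [Finset.mul_sum, Finset.sum_mul]
    exact Finset.sum_comm' (fun x y => by
      simp [Finset.mem_Iic, Finset.mem_Ici, and_comm])
  -- quadratic part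
  set F : (EuclideanSpace ℝ (Fin T) × EuclideanSpace ℝ (Fin T)) → (Fin T → ℝ) → ℝ :=
    fun u p => ∑ t, ((1 + κ) / 2 * (p t) ^ 2 - (b t + c u t) * p t) with hF
  have hLrep : ∀ p u, L p u = F u p +
      ((∑ t, (b t) ^ 2 / 2) + (∑ t, u.1 t * Slo t) - ∑ t, u.2 t * Shi t) := by
    intro p u
    rw [hL]
    have e1 : ∑ t, u.1 t * (Slo t - cumsum p t)
        = ∑ t, u.1 t * Slo t - ∑ t, u.1 t * cumsum p t := by
      rw [← Finset.sum_sub_distrib]; exact Finset.sum_congr rfl (fun t _ => by ring)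
    have e2 : ∑ t, u.2 t * (cumsum p t - Shi t)
        = ∑ t, u.2 t * cumsum p t - ∑ t, u.2 t * Shi t := by
      rw [← Finset.sum_sub_distrib]; exact Finset.sum_congr rfl (fun t _ => by ring)
    have e3 : ∑ t, u.1 t * cumsum p t - ∑ t, u.2 t * cumsum p t
        = ∑ t, c u t * p t := by
      rw [← Finset.sum_sub_distrib]
      have h' : ∀ t ∈ Finset.univ, u.1 t * cumsum p t - u.2 t * cumsum p t
          = (fun t => u.1 t - u.2 t) t * cumsum p t := fun t _ => by ring
      rw [Finset.sum_congr rfl h', hswap]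
    have e4 : F u p + ((∑ t, (b t) ^ 2 / 2) + ∑ t, c u t * p t)
        = (1 / 2) * ∑ t, (p t - b t) ^ 2 + (κ / 2) * ∑ t, (p t) ^ 2 := by
      simp only [hF, Finset.mul_sum, ← Finset.sum_add_distrib]
      exact Finset.sum_congr rfl (fun t _ => by ring)
    rw [e1, e2]
    linarith [e3, e4]
  -- quadratic growth at the clipped minimizer
  have hgrow : ∀ u (p : Fin T → ℝ), (∀ t, Plo t ≤ p t ∧ p t ≤ Phi t) →
      F u (pdag u) + (1 + κ) / 2 * ∑ t, (p t - pdag u t) ^ 2 ≤ F u p := by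
    intro u p hp
    simp only [hF, Finset.mul_sum, ← Finset.sum_add_distrib]
    apply Finset.sum_le_sum
    intro t _
    have h := clip_opt (1 + κ) (b t + c u t) (Plo t) (Phi t) (p t) hκ1 (hP t)
      (hp t).1 (hp t).2
    rw [hpdag]
    convert h using 3 <;> ring
  have hbox : ∀ u t, Plo t ≤ pdag u t ∧ pdag u t ≤ Phi t := by
    intro u t
    rw [hpdag]
    exact ⟨le_min (le_max_right _ _) (hP t), min_le_right _ _⟩
  -- weak minimality
  have hweak : ∀ u (p : Fin T → ℝ), (∀ t, Plo t ≤ p t ∧ p t ≤ Phi t) →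
      L (pdag u) u ≤ L p u := by
    intro u p hp
    rw [hLrep, hLrep]
    have h1 := hgrow u p hp
    have h2 : (0:ℝ) ≤ (1 + κ) / 2 * ∑ t, (p t - pdag u t) ^ 2 :=
      mul_nonneg (by linarith) (Finset.sum_nonneg fun t _ => sq_nonneg _)
    linarith
  -- affine in u
  have haff : ∀ (p : Fin T → ℝ) (x y : EuclideanSpace ℝ (Fin T) × EuclideanSpace ℝ (Fin T))
      (θ σ : ℝ), θ + σ = 1 → L p (θ • x + σ • y) = θ * L p x + σ * L p y := by
    intro p x y θ σ hθσ
    rw [hL, hL, hL]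
    have h1 : ∀ t, (θ • x + σ • y).1 t = θ * x.1 t + σ * y.1 t := fun t => rfl
    have h2 : ∀ t, (θ • x + σ • y).2 t = θ * x.2 t + σ * y.2 t := fun t => rfl
    simp only [h1, h2, add_mul, mul_assoc]
    rw [Finset.sum_add_distrib, Finset.sum_add_distrib,
        ← Finset.mul_sum, ← Finset.mul_sum, ← Finset.mul_sum, ← Finset.mul_sum]
    linear_combination (-(1 / 2 * ∑ t, (p t - b t) ^ 2 + κ / 2 * ∑ t, (p t) ^ 2)) * hθσ
  -- exact affine difference formula in u
  have hLsub : ∀ (q : Fin T → ℝ) (v w : EuclideanSpace ℝ (Fin T) × EuclideanSpace ℝ (Fin T)),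
      L q v = L q w + (∑ t, (Slo t - cumsum q t) * (v.1 t - w.1 t)
        + ∑ t, (cumsum q t - Shi t) * (v.2 t - w.2 t)) := by
    intro q v w
    rw [hL, hL]
    have e : ∀ (f g A : Fin T → ℝ), ∑ t, A t * (f t - g t)
        = ∑ t, f t * A t - ∑ t, g t * A t := by
      intro f g A
      rw [← Finset.sum_sub_distrib]
      exact Finset.sum_congr rfl (fun t _ => by ring)
    rw [e (fun t => v.1 t) (fun t => w.1 t) (fun t => Slo t - cumsum q t),
        e (fun t => v.2 t) (fun t => w.2 t) (fun t => cumsum q t - Shi t)]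
    ring
  refine ⟨?_, ?_, ?_⟩
  · -- Part 1: pdag u is the unique minimizer over the box
    intro u
    refine ⟨hbox u, ?_⟩
    intro p hp hne
    rw [hLrep, hLrep]
    have h1 := hgrow u p hp
    have h2 : 0 < ∑ t, (p t - pdag u t) ^ 2 := by
      obtain ⟨t, ht⟩ := Function.ne_iff.1 hne
      refine Finset.sum_pos' (fun t _ => sq_nonneg _) ⟨t, Finset.mem_univ t, ?_⟩
      have h3 := pow_pos (abs_pos.2 (sub_ne_zero.2 ht)) 2
      rwa [sq_abs] at h3
    have h4 : 0 < (1 + κ) / 2 * ∑ t, (p t - pdag u t) ^ 2 :=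
      mul_pos (by linarith) h2
    linarith
  · -- Part 2: concavity
    refine ⟨convex_univ, ?_⟩
    intro x _ y _ a a' ha ha' hab
    simp only [smul_eq_mul]
    have h1 : ψ (a • x + a' • y)
        = a * L (pdag (a • x + a' • y)) x + a' * L (pdag (a • x + a' • y)) y := by
      rw [hψ, haff _ _ _ _ _ hab]
    have h2 : L (pdag x) x ≤ L (pdag (a • x + a' • y)) x := hweak x _ (hbox _)
    have h3 : L (pdag y) y ≤ L (pdag (a • x + a' • y)) y := hweak y _ (hbox _)
    rw [h1, hψ x, hψ y]
    exact add_le_add (mul_le_mul_of_nonneg_left h2 ha)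
      (mul_le_mul_of_nonneg_left h3 ha')
  · -- Part 3: differentiability
    intro u
    set g1 : EuclideanSpace ℝ (Fin T) :=
      (WithLp.equiv 2 (Fin T → ℝ)).symm (fun t => Slo t - cumsum (pdag u) t) with hg1
    set g2 : EuclideanSpace ℝ (Fin T) :=
      (WithLp.equiv 2 (Fin T → ℝ)).symm (fun t => cumsum (pdag u) t - Shi t) with hg2
    set ℓ := ((innerSL ℝ g1).comp
          (ContinuousLinearMap.fst ℝ (EuclideanSpace ℝ (Fin T))
            (EuclideanSpace ℝ (Fin T)))) +
       ((innerSL ℝ g2).comp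
          (ContinuousLinearMap.snd ℝ (EuclideanSpace ℝ (Fin T))
            (EuclideanSpace ℝ (Fin T)))) with hℓdef
    have hℓ : ∀ w : EuclideanSpace ℝ (Fin T) × EuclideanSpace ℝ (Fin T),
        ℓ w = ∑ t, (Slo t - cumsum (pdag u) t) * w.1 t
          + ∑ t, (cumsum (pdag u) t - Shi t) * w.2 t := by
      intro w
      rw [hℓdef]
      simp only [ContinuousLinearMap.add_apply, ContinuousLinearMap.coe_comp',
        Function.comp_apply, ContinuousLinearMap.coe_fst', ContinuousLinearMap.coe_snd',
        innerSL_apply_apply, hg1, hg2, PiLp.inner_apply,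
        RCLike.inner_apply, conj_trivial, WithLp.equiv_symm_apply]
      congr 1 <;> exact Finset.sum_congr rfl (fun t _ => mul_comm _ _)
    -- coordinatewise bounds
    have hcoord : ∀ (w : EuclideanSpace ℝ (Fin T) × EuclideanSpace ℝ (Fin T)) (t : Fin T),
        |w.1 t| ≤ ‖w‖ ∧ |w.2 t| ≤ ‖w‖ := by
      intro w t
      exact ⟨le_trans (coord_abs_le_norm w.1 t) (norm_fst_le w),
        le_trans (coord_abs_le_norm w.2 t) (norm_snd_le w)⟩
    -- Lipschitz bound on pdag
    have hpdlip : ∀ (v : EuclideanSpace ℝ (Fin T) × EuclideanSpace ℝ (Fin T)) (t : Fin T),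
        |pdag v t - pdag u t| ≤ 2 * T * ‖v - u‖ := by
      intro v t
      rw [hpdag, hpdag]
      refine le_trans (clip_lipschitz _ _ _ _) ?_
      have e1 : (b t + ∑ τ ∈ Finset.Ici t, (v.1 τ - v.2 τ)) / (1 + κ)
          - (b t + ∑ τ ∈ Finset.Ici t, (u.1 τ - u.2 τ)) / (1 + κ)
          = (∑ τ ∈ Finset.Ici t, ((v.1 τ - v.2 τ) - (u.1 τ - u.2 τ))) / (1 + κ) := by
        rw [Finset.sum_sub_distrib]
        field_simp
        simp only [Finset.sum_sub_distrib]
        ring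
      rw [e1, abs_div, abs_of_pos hκ1]
      have e2 : |∑ τ ∈ Finset.Ici t, ((v.1 τ - v.2 τ) - (u.1 τ - u.2 τ))|
          ≤ 2 * T * ‖v - u‖ := by
        refine le_trans (Finset.abs_sum_le_sum_abs _ _) ?_
        have e3 : ∀ τ ∈ Finset.Ici t, |(v.1 τ - v.2 τ) - (u.1 τ - u.2 τ)| ≤ 2 * ‖v - u‖ := by
          intro τ _
          have h1 : |v.1 τ - u.1 τ| ≤ ‖v - u‖ := (hcoord (v - u) τ).1
          have h2 : |v.2 τ - u.2 τ| ≤ ‖v - u‖ := (hcoord (v - u) τ).2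
          have h1' := abs_le.1 h1
          have h2' := abs_le.1 h2
          rw [abs_le]
          constructor <;> linarith
        refine le_trans (Finset.sum_le_sum e3) ?_
        rw [Finset.sum_const, nsmul_eq_mul]
        have hcard : ((Finset.Ici t).card : ℝ) ≤ T := by
          have hcu := Finset.card_le_univ (Finset.Ici t)
          simp only [Finset.card_univ, Fintype.card_fin] at hcu
          exact_mod_cast hcu
        calc ((Finset.Ici t).card : ℝ) * (2 * ‖v - u‖)
            ≤ (T:ℝ) * (2 * ‖v - u‖) :=
              mul_le_mul_of_nonneg_right hcard (by positivity)
          _ = 2 * T * ‖v - u‖ := by ring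
      refine le_trans (div_le_self (abs_nonneg _) (by linarith)) e2
    -- cumulative sums Lipschitz
    have hcumlip : ∀ (v : EuclideanSpace ℝ (Fin T) × EuclideanSpace ℝ (Fin T)) (t : Fin T),
        |cumsum (pdag v) t - cumsum (pdag u) t| ≤ 2 * T ^ 2 * ‖v - u‖ := by
      intro v t
      unfold cumsum
      rw [← Finset.sum_sub_distrib]
      refine le_trans (Finset.abs_sum_le_sum_abs _ _) ?_
      refine le_trans (Finset.sum_le_sum (fun τ _ => hpdlip v τ)) ?_
      rw [Finset.sum_const, nsmul_eq_mul]
      have hcard : ((Finset.Iic t).card : ℝ) ≤ T := by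
        have hcu := Finset.card_le_univ (Finset.Iic t)
        simp only [Finset.card_univ, Fintype.card_fin] at hcu
        exact_mod_cast hcu
      calc ((Finset.Iic t).card : ℝ) * (2 * T * ‖v - u‖)
          ≤ (T:ℝ) * (2 * T * ‖v - u‖) :=
            mul_le_mul_of_nonneg_right hcard (by positivity)
        _ = 2 * T ^ 2 * ‖v - u‖ := by ring
    -- the global error bound
    set C : ℝ := 4 * T ^ 3 + 1 with hC
    have hCpos : 0 < C := by positivity
    have herr : ∀ v : EuclideanSpace ℝ (Fin T) × EuclideanSpace ℝ (Fin T),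
        |ψ v - ψ u - ℓ (v - u)| ≤ C * ‖v - u‖ ^ 2 := by
      intro v
      have hsub1 : ∀ t, (v - u).1 t = v.1 t - u.1 t := fun t => rfl
      have hsub2 : ∀ t, (v - u).2 t = v.2 t - u.2 t := fun t => rfl
      have hℓvu : ℓ (v - u) = ∑ t, (Slo t - cumsum (pdag u) t) * (v.1 t - u.1 t)
          + ∑ t, (cumsum (pdag u) t - Shi t) * (v.2 t - u.2 t) := by
        rw [hℓ]
        simp only [hsub1, hsub2]
      -- upper bound : err ≤ 0
      have hub : ψ v - ψ u - ℓ (v - u) ≤ 0 := by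
        have h1 : ψ v ≤ L (pdag u) v := by rw [hψ]; exact hweak v _ (hbox u)
        have h2 := hLsub (pdag u) v u
        rw [hℓvu, hψ u]
        linarith
      -- lower bound
      have hlb : ∑ t, (Slo t - cumsum (pdag v) t) * (v.1 t - u.1 t)
          + ∑ t, (cumsum (pdag v) t - Shi t) * (v.2 t - u.2 t)
          ≤ ψ v - ψ u := by
        have h1 : ψ u ≤ L (pdag v) u := by rw [hψ]; exact hweak u _ (hbox v)
        have h2 := hLsub (pdag v) v u
        rw [hψ v]
        linarith
      -- the difference of the two linear forms
      have hdiff : |(∑ t, (Slo t - cumsum (pdag v) t) * (v.1 t - u.1 t)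
            + ∑ t, (cumsum (pdag v) t - Shi t) * (v.2 t - u.2 t))
          - ℓ (v - u)| ≤ 4 * T ^ 3 * ‖v - u‖ ^ 2 := by
        rw [hℓvu]
        have e : (∑ t, (Slo t - cumsum (pdag v) t) * (v.1 t - u.1 t)
              + ∑ t, (cumsum (pdag v) t - Shi t) * (v.2 t - u.2 t))
            - (∑ t, (Slo t - cumsum (pdag u) t) * (v.1 t - u.1 t)
              + ∑ t, (cumsum (pdag u) t - Shi t) * (v.2 t - u.2 t))
            = ∑ t, ((cumsum (pdag u) t - cumsum (pdag v) t) * (v.1 t - u.1 t)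
              + (cumsum (pdag v) t - cumsum (pdag u) t) * (v.2 t - u.2 t)) := by
          have ef : ∑ t, (cumsum (pdag u) t - cumsum (pdag v) t) * (v.1 t - u.1 t)
              = (∑ t, (Slo t - cumsum (pdag v) t) * (v.1 t - u.1 t))
                - ∑ t, (Slo t - cumsum (pdag u) t) * (v.1 t - u.1 t) := by
            rw [← Finset.sum_sub_distrib]
            exact Finset.sum_congr rfl (fun t _ => by ring)
          have eg : ∑ t, (cumsum (pdag v) t - cumsum (pdag u) t) * (v.2 t - u.2 t)
              = (∑ t, (cumsum (pdag v) t - Shi t) * (v.2 t - u.2 t))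
                - ∑ t, (cumsum (pdag u) t - Shi t) * (v.2 t - u.2 t) := by
            rw [← Finset.sum_sub_distrib]
            exact Finset.sum_congr rfl (fun t _ => by ring)
          rw [Finset.sum_add_distrib, ef, eg]
          ring
        rw [e]
        refine le_trans (Finset.abs_sum_le_sum_abs _ _) ?_
        have hterm : ∀ t ∈ Finset.univ, |(cumsum (pdag u) t - cumsum (pdag v) t) * (v.1 t - u.1 t)
            + (cumsum (pdag v) t - cumsum (pdag u) t) * (v.2 t - u.2 t)|
            ≤ 4 * T ^ 2 * ‖v - u‖ ^ 2 := by
          intro t _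
          have hc1 := hcumlip v t
          have h1 : |v.1 t - u.1 t| ≤ ‖v - u‖ := (hcoord (v - u) t).1
          have h2 : |v.2 t - u.2 t| ≤ ‖v - u‖ := (hcoord (v - u) t).2
          refine le_trans (abs_add_le _ _) ?_
          rw [abs_mul, abs_mul, abs_sub_comm (cumsum (pdag u) t) (cumsum (pdag v) t)]
          have e1 : |cumsum (pdag v) t - cumsum (pdag u) t| * |v.1 t - u.1 t|
              ≤ (2 * T ^ 2 * ‖v - u‖) * ‖v - u‖ :=
            mul_le_mul hc1 h1 (abs_nonneg _) (by positivity)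
          have e2 : |cumsum (pdag v) t - cumsum (pdag u) t| * |v.2 t - u.2 t|
              ≤ (2 * T ^ 2 * ‖v - u‖) * ‖v - u‖ :=
            mul_le_mul hc1 h2 (abs_nonneg _) (by positivity)
          have e3 : (2 * (T:ℝ) ^ 2 * ‖v - u‖) * ‖v - u‖ = 2 * T ^ 2 * ‖v - u‖ ^ 2 := by
            ring
          linarith
        refine le_trans (Finset.sum_le_sum hterm) ?_
        rw [Finset.sum_const, nsmul_eq_mul]
        have h2 : (Finset.univ : Finset (Fin T)).card = T := by simp
        rw [h2]
        exact le_of_eq (by ring)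
      have habs : |ψ v - ψ u - ℓ (v - u)| ≤ 4 * T ^ 3 * ‖v - u‖ ^ 2 := by
        rw [abs_le]
        constructor
        · have := abs_le.1 hdiff
          linarith [this.1]
        · have h0 : (0:ℝ) ≤ 4 * T ^ 3 * ‖v - u‖ ^ 2 := by positivity
          linarith
      refine le_trans habs ?_
      have h0 : (0:ℝ) ≤ ‖v - u‖ ^ 2 := sq_nonneg _
      have h1 : C * ‖v - u‖ ^ 2 - 4 * T ^ 3 * ‖v - u‖ ^ 2 = ‖v - u‖ ^ 2 := by
        rw [hC]; ring
      linarith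
    -- conclude differentiability
    rw [hasFDerivAt_iff_isLittleO_nhds_zero]
    rw [Asymptotics.isLittleO_iff]
    intro ε hε
    filter_upwards [Metric.ball_mem_nhds
      (0 : EuclideanSpace ℝ (Fin T) × EuclideanSpace ℝ (Fin T))
      (div_pos hε hCpos)] with h hh
    have hnorm : ‖h‖ < ε / C := by
      rw [Metric.mem_ball, dist_zero_right] at hh
      exact hh
    have h1 := herr (u + h)
    have h2 : u + h - u = h := by abel
    rw [h2] at h1
    have h3 : C * ‖h‖ ≤ ε := by
      rw [lt_div_iff₀ hCpos] at hnorm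
      have hcomm : C * ‖h‖ = ‖h‖ * C := mul_comm _ _
      linarith
    calc ‖ψ (u + h) - ψ u - ℓ h‖ = |ψ (u + h) - ψ u - ℓ h| := Real.norm_eq_abs _
      _ ≤ C * ‖h‖ ^ 2 := h1
      _ = C * ‖h‖ * ‖h‖ := by ring
      _ ≤ ε * ‖h‖ := mul_le_mul_of_nonneg_right h3 (norm_nonneg h)
end

section
/- Let f : ℝⁿ → ℝ be σ-strongly convex (σ > 0) over a closed convex set X, let u ↦ p†(u) assign to each dual point the unique minimizer of the Lagrangian L(·, u) over X, and suppose ψ(u) = L(p†(u), u) is the concave dual function with unique coupling via a linear map. If a sequence u⁽ᵏ⁾ satisfies Φ* − ψ(u⁽ᵏ⁾) ≤ ε_k where Φ* is the primal optimal value, then ‖p†(u⁽ᵏ⁾) − p*‖² ≤ (2/σ) ε_k, where p* is the unique primal minimizer. -/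
open Filter Set Topology

/-- Comparing the minimizer `x` with points of the segment `[x, y]` near `x`, the defect term
`θ (1 - θ) φ ‖y - x‖` of uniform convexity survives division by `θ`; let `θ → 0`. -/
lemma UniformConvexOn.le_sub_of_isMinOn {E : Type*} [NormedAddCommGroup E] [NormedSpace ℝ E]
    {s : Set E} {φ : ℝ → ℝ} {f : E → ℝ} (hf : UniformConvexOn s φ f) {x y : E}
    (hx : x ∈ s) (hy : y ∈ s) (hmin : IsMinOn f s x) :
    φ ‖y - x‖ ≤ f y - f x := by
  have hsegment : ∀ θ ∈ Ioo (0 : ℝ) 1, (1 - θ) * φ ‖y - x‖ ≤ f y - f x := by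
    rintro θ ⟨hθ0, hθ1⟩
    have hsum : θ + (1 - θ) = 1 := add_sub_cancel _ _
    have hconv := hf.2 hy hx hθ0.le (sub_nonneg.2 hθ1.le) hsum
    have hmin_le := isMinOn_iff.1 hmin _ (hf.1 hy hx hθ0.le (sub_nonneg.2 hθ1.le) hsum)
    rw [smul_eq_mul, smul_eq_mul] at hconv
    refine le_of_mul_le_mul_left ?_ hθ0
    linarith
  have hlim : Tendsto (fun θ : ℝ => (1 - θ) * φ ‖y - x‖) (𝓝[>] 0) (𝓝 (φ ‖y - x‖)) := by
    refine tendsto_nhdsWithin_of_tendsto_nhds ?_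
    simpa using ((continuous_const.sub continuous_id).mul continuous_const).tendsto
      (f := fun θ : ℝ => (1 - θ) * φ ‖y - x‖) 0
  exact le_of_tendsto hlim (eventually_of_mem (Ioo_mem_nhdsGT one_pos) hsegment)

theorem primal_recovery_bound_general (n : ℕ) (σ : ℝ) (hσ : 0 < σ)
    (D : Type) (X : Set (EuclideanSpace ℝ (Fin n)))
    (L : EuclideanSpace ℝ (Fin n) → D → ℝ)
    (hstrong : ∀ u : D, StrongConvexOn X σ (fun p => L p u))
    (pdag : D → EuclideanSpace ℝ (Fin n))
    (hpdag_mem : ∀ u, pdag u ∈ X)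
    (hpdag_min : ∀ u, ∀ p ∈ X, L (pdag u) u ≤ L p u)
    (ψ : D → ℝ) (hψ : ∀ u, ψ u = L (pdag u) u)
    (Φstar : ℝ) (pstar : EuclideanSpace ℝ (Fin n)) (hpstar : pstar ∈ X)
    (hweak : ∀ u : D, L pstar u ≤ Φstar)
    (u : ℕ → D) (ε : ℕ → ℝ) (hgap : ∀ k, Φstar - ψ (u k) ≤ ε k) :
    ∀ k, ‖pdag (u k) - pstar‖ ^ 2 ≤ (2 / σ) * ε k := by
  intro k
  have hgrowth : σ / 2 * ‖pstar - pdag (u k)‖ ^ 2 ≤ L pstar (u k) - L (pdag (u k)) (u k) :=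
    (hstrong (u k)).le_sub_of_isMinOn (hpdag_mem (u k)) hpstar (hpdag_min (u k))
  calc ‖pdag (u k) - pstar‖ ^ 2 = (2 / σ) * (σ / 2 * ‖pstar - pdag (u k)‖ ^ 2) := by
        rw [norm_sub_rev]; field_simp
    _ ≤ (2 / σ) * ε k := by
        gcongr
        linarith [hweak (u k), hgap k, hψ (u k)]

/-- Primal recovery under strong convexity: if `L(·,u)` is σ-strongly
convex on the closed convex set `X`, `p†(u)` minimizes `L(·,u)` over `X`,
`ψ(u) = L(p†(u), u)`, weak duality `L(p*, u_k) ≤ Φ*` holds, and the dual gap satisfies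
`Φ* − ψ(u_k) ≤ ε_k`, then `‖p†(u_k) − p*‖² ≤ (2/σ) ε_k`. -/
theorem primal_recovery_bound (n : ℕ) (σ : ℝ) (hσ : 0 < σ)
    (D : Type) (X : Set (EuclideanSpace ℝ (Fin n)))
    (hXconv : Convex ℝ X) (hXcl : IsClosed X)
    (L : EuclideanSpace ℝ (Fin n) → D → ℝ)
    (hstrong : ∀ u : D, StrongConvexOn X σ (fun p => L p u))
    (pdag : D → EuclideanSpace ℝ (Fin n))
    (hpdag_mem : ∀ u, pdag u ∈ X)
    (hpdag_min : ∀ u, ∀ p ∈ X, L (pdag u) u ≤ L p u)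
    (ψ : D → ℝ) (hψ : ∀ u, ψ u = L (pdag u) u)
    (Φstar : ℝ) (pstar : EuclideanSpace ℝ (Fin n)) (hpstar : pstar ∈ X)
    (hweak : ∀ u : D, L pstar u ≤ Φstar)
    (u : ℕ → D) (ε : ℕ → ℝ) (hgap : ∀ k, Φstar - ψ (u k) ≤ ε k) :
    ∀ k, ‖pdag (u k) - pstar‖ ^ 2 ≤ (2 / σ) * ε k :=
  primal_recovery_bound_general n σ hσ D X L hstrong pdag hpdag_mem hpdag_min ψ hψ Φstar pstar
    hpstar hweak u ε hgap
end
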